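/- A symmetric tensor of even order m is a P tensor if and only if it is positive definite, i.e., A x^m > 0 for all nonzero x in R^n. -/

import Mathlib

open Finset

noncomputable section

/-- The contraction `(A x^{m})_i` of an order-`m+1` tensor with `m` copies of `x`. -/
def contrT {m n : ℕ} (A : (Fin (m+1) → Fin n) → ℝ) (x : Fin n → ℝ) (i : Fin n) : ℝ :=
  ∑ f : Fin m → Fin n, A (Fin.cons i f) * ∏ k, x (f k)

/-- `A x^M` for an order-`M` tensor. -/
def polyT {M n : ℕ} (A : (Fin M → Fin n) → ℝ) (x : Fin n → ℝ) : ℝ :=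
  ∑ f : Fin M → Fin n, A f * ∏ k, x (f k)

/-- P tensor: for every nonzero `x`, `max_i x_i (A x^{m-1})_i > 0`. -/
def IsPTensor {m n : ℕ} (A : (Fin (m+1) → Fin n) → ℝ) : Prop :=
  ∀ x : Fin n → ℝ, x ≠ 0 → ∃ i : Fin n, 0 < x i * contrT A x i

/-- P₀ tensor: for every nonzero `x` there is `i` with `x i ≠ 0` and `x_i (A x^{m-1})_i ≥ 0`. -/
def IsP0Tensor {m n : ℕ} (A : (Fin (m+1) → Fin n) → ℝ) : Prop :=
  ∀ x : Fin n → ℝ, x ≠ 0 → ∃ i : Fin n, x i ≠ 0 ∧ 0 ≤ x i * contrT A x i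

def infNorm {n : ℕ} (x : Fin n → ℝ) : ℝ := ⨆ i, |x i|

/-- The operator `T_A(x) = ‖x‖₂^{2-m} A x^{m-1}` (order of the tensor is `m+1`). -/
def TA {m n : ℕ} (A : (Fin (m+1) → Fin n) → ℝ) (x : Fin n → ℝ) (i : Fin n) : ℝ :=
  if x = 0 then 0
  else (Real.sqrt (∑ j, x j ^ 2)) ^ ((2 : ℤ) - ((m : ℤ) + 1)) * contrT A x i

/-- `α(T_A) = min_{‖x‖_∞ = 1} max_i x_i (T_A(x))_i`. -/
def alphaT {m n : ℕ} (A : (Fin (m+1) → Fin n) → ℝ) : ℝ :=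
  sInf ((fun x => ⨆ i, x i * TA A x i) '' {x : Fin n → ℝ | infNorm x = 1})

/-- B tensor of order `m+1`. -/
def IsBTensor {m n : ℕ} (B : (Fin (m+1) → Fin n) → ℝ) : Prop :=
  ∀ i : Fin n, (0 < ∑ f : Fin m → Fin n, B (Fin.cons i f)) ∧
    ∀ g : Fin m → Fin n, g ≠ (fun _ => i) →
      B (Fin.cons i g) < (1 / (n : ℝ) ^ m) * ∑ f : Fin m → Fin n, B (Fin.cons i f)

/-- B₀ tensor of order `m+1`. -/
def IsB0Tensor {m n : ℕ} (B : (Fin (m+1) → Fin n) → ℝ) : Prop :=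
  ∀ i : Fin n, (0 ≤ ∑ f : Fin m → Fin n, B (Fin.cons i f)) ∧
    ∀ g : Fin m → Fin n, g ≠ (fun _ => i) →
      B (Fin.cons i g) ≤ (1 / (n : ℝ) ^ m) * ∑ f : Fin m → Fin n, B (Fin.cons i f)

/-!
Positive definite implies P because `A x^{m+1} = ∑ᵢ xᵢ (A x^m)ᵢ`, so some summand is positive.
Conversely, let `x₀` minimise `A x^{m+1}` on the compact set `∑ⱼ xⱼ^{m+1} = 1` (the order `m+1` is
even) and let `μ` be the minimum. By homogeneity `A y^{m+1} ≥ μ ∑ⱼ yⱼ^{m+1}` for every `y`, and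
the Lagrange condition at `x₀` says that `x₀` is an H-eigenvector: `(A x₀^m)ᵢ = μ x₀ᵢ^m`. The P
property at `x₀` gives an `i` with `0 < x₀ᵢ (A x₀^m)ᵢ = μ x₀ᵢ^{m+1}`, hence `μ > 0`.
-/

def IsSymmetricTensor {M n : ℕ} (A : (Fin M → Fin n) → ℝ) : Prop :=
  ∀ (σ : Equiv.Perm (Fin M)) (f : Fin M → Fin n), A (f ∘ σ) = A f

def powSum {n : ℕ} (p : ℕ) (y : Fin n → ℝ) : ℝ := ∑ j, y j ^ p

lemma Fin.prod_univ_erase_zero {M : Type*} [CommMonoid M] {m : ℕ} (h : Fin (m+1) → M) :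
    ∏ l ∈ univ.erase 0, h l = ∏ k : Fin m, h k.succ := by
  rw [Fin.univ_succ, Finset.erase_cons, Finset.prod_map]
  rfl

lemma Fintype.sum_pi_fin_succ {M : Type*} [AddCommMonoid M] {m n : ℕ}
    (H : (Fin (m+1) → Fin n) → M) :
    ∑ f, H f = ∑ i, ∑ g : Fin m → Fin n, H (Fin.cons i g) := by
  rw [← Fintype.sum_equiv (Fin.consEquiv fun _ => Fin n) (fun p => H (Fin.cons p.1 p.2)) H
    fun _ => rfl]
  exact Fintype.sum_prod_type _

section Homogeneous
variable {M n : ℕ}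

lemma polyT_smul (A : (Fin M → Fin n) → ℝ) (c : ℝ) (x : Fin n → ℝ) :
    polyT A (c • x) = c ^ M * polyT A x := by
  simp only [polyT, Finset.mul_sum, Pi.smul_apply, smul_eq_mul, Finset.prod_mul_distrib,
    Finset.prod_const, Finset.card_univ, Fintype.card_fin]
  exact Finset.sum_congr rfl fun _ _ => by ring

lemma polyT_zero (hM : M ≠ 0) (A : (Fin M → Fin n) → ℝ) : polyT A 0 = 0 := by
  simpa [zero_pow hM] using polyT_smul A 0 0

lemma continuous_polyT (A : (Fin M → Fin n) → ℝ) : Continuous (polyT A) :=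
  continuous_finsetSum _ fun _ _ =>
    continuous_const.mul (continuous_finsetProd _ fun _ _ => continuous_apply _)

lemma powSum_smul (c : ℝ) (y : Fin n → ℝ) : powSum M (c • y) = c ^ M * powSum M y := by
  simp only [powSum, Pi.smul_apply, smul_eq_mul, mul_pow, Finset.mul_sum]

lemma continuous_powSum : Continuous (powSum (n := n) M) :=
  continuous_finsetSum _ fun j _ => (continuous_apply j).pow _

lemma powSum_zero (hM : M ≠ 0) : powSum M (0 : Fin n → ℝ) = 0 := by
  simp [powSum, hM]

lemma powSum_pos (hM : Even M) {y : Fin n → ℝ} (hy : y ≠ 0) : 0 < powSum M y := by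
  obtain ⟨j, hj⟩ := Function.ne_iff.1 hy
  exact Finset.sum_pos' (fun l _ => hM.pow_nonneg _) ⟨j, Finset.mem_univ j, hM.pow_pos hj⟩

lemma abs_le_one_of_powSum_eq_one (hM : Even M) (hM0 : M ≠ 0) {y : Fin n → ℝ}
    (hy : powSum M y = 1) (i : Fin n) : |y i| ≤ 1 := by
  have hi : |y i| ^ M ≤ 1 := by
    rw [hM.pow_abs, ← hy]
    exact Finset.single_le_sum (f := fun j => y j ^ M) (fun j _ => hM.pow_nonneg _)
      (Finset.mem_univ i)
  exact (pow_le_one_iff_of_nonneg (abs_nonneg _) hM0).1 hi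

lemma isCompact_powSum_eq_one (hM : Even M) (hM0 : M ≠ 0) :
    IsCompact {y : Fin n → ℝ | powSum M y = 1} := by
  refine Metric.isCompact_of_isClosed_isBounded
    (isClosed_eq continuous_powSum continuous_const) ?_
  refine (Metric.isBounded_closedBall (x := (0 : Fin n → ℝ)) (r := 1)).subset fun y hy => ?_
  rw [Metric.mem_closedBall, dist_zero_right, pi_norm_le_iff_of_nonneg zero_le_one]
  exact fun i => (Real.norm_eq_abs _).trans_le (abs_le_one_of_powSum_eq_one hM hM0 hy i)

-- Rescale `y` onto the unit sphere by the positive `M`-th root of `powSum M y`.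
lemma IsMinOn.mul_powSum_le_polyT (hM : Even M) (hM0 : M ≠ 0) {A : (Fin M → Fin n) → ℝ}
    {x₀ : Fin n → ℝ} (hmin : IsMinOn (polyT A) {y | powSum M y = 1} x₀) (y : Fin n → ℝ) :
    polyT A x₀ * powSum M y ≤ polyT A y := by
  rcases eq_or_ne y 0 with rfl | hy
  · simp [powSum_zero hM0, polyT_zero hM0]
  set s := powSum M y
  have hs : 0 < s := powSum_pos hM hy
  set c := s ^ (M : ℝ)⁻¹
  have hc : 0 < c := Real.rpow_pos_of_pos hs _
  have hcM : c ^ M = s := Real.rpow_inv_natCast_pow hs.le hM0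
  have hunit : powSum M (c⁻¹ • y) = 1 := by
    rw [powSum_smul, inv_pow, hcM, inv_mul_cancel₀ hs.ne']
  calc polyT A x₀ * s ≤ polyT A (c⁻¹ • y) * s :=
        mul_le_mul_of_nonneg_right (hmin hunit) hs.le
    _ = polyT A y := by
        rw [← hcM, mul_comm, ← polyT_smul, smul_inv_smul₀ hc.ne']

end Homogeneous

section Derivative
variable {m n : ℕ}

lemma sum_mul_prod_erase_zero_mul (A : (Fin (m+1) → Fin n) → ℝ) (x v : Fin n → ℝ) :
    ∑ f : Fin (m+1) → Fin n, A f * ((∏ l ∈ univ.erase 0, x (f l)) * v (f 0))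
      = ∑ i, v i * contrT A x i := by
  rw [Fintype.sum_pi_fin_succ]
  refine Finset.sum_congr rfl fun i _ => ?_
  rw [contrT, Finset.mul_sum]
  refine Finset.sum_congr rfl fun g _ => ?_
  rw [Fin.prod_univ_erase_zero]
  simp only [Fin.cons_zero, Fin.cons_succ]
  ring

lemma polyT_eq_sum_mul_contrT (A : (Fin (m+1) → Fin n) → ℝ) (x : Fin n → ℝ) :
    polyT A x = ∑ i, x i * contrT A x i := by
  rw [← sum_mul_prod_erase_zero_mul, polyT]
  simp only [Finset.prod_erase_mul _ _ (Finset.mem_univ _)]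

/-- Symmetry of `A` lets the distinguished slot `k` be moved to `0`. -/
lemma IsSymmetricTensor.sum_mul_prod_erase_mul {A : (Fin (m+1) → Fin n) → ℝ}
    (hA : IsSymmetricTensor A) (x v : Fin n → ℝ) (k : Fin (m+1)) :
    ∑ f : Fin (m+1) → Fin n, A f * ((∏ l ∈ univ.erase k, x (f l)) * v (f k))
      = ∑ i, v i * contrT A x i := by
  rw [← sum_mul_prod_erase_zero_mul]
  set σ := Equiv.swap 0 k
  refine Fintype.sum_bijective (· ∘ σ)
    (Function.Involutive.bijective fun f => by ext; simp [σ]) _ _ fun f => ?_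
  have hprod : ∏ l ∈ univ.erase k, x (f l) = ∏ l ∈ univ.erase 0, x (f (σ l)) :=
    Finset.prod_equiv σ (by simp [σ, Equiv.swap_apply_eq_iff]) (by simp [σ])
  simp [hprod, hA σ f, σ]

lemma IsSymmetricTensor.hasDerivAt_polyT_add_smul {A : (Fin (m+1) → Fin n) → ℝ}
    (hA : IsSymmetricTensor A) (x v : Fin n → ℝ) :
    HasDerivAt (fun t : ℝ => polyT A (x + t • v))
      ((m + 1) * ∑ i, v i * contrT A x i) 0 := by
  have hterm (f : Fin (m+1) → Fin n) : HasDerivAt (fun t : ℝ => A f * ∏ k, (x (f k) + t * v (f k)))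
      (A f * ∑ k, (∏ l ∈ univ.erase k, (x (f l) + 0 * v (f l))) • v (f k)) 0 :=
    (HasDerivAt.fun_finsetProd fun k _ =>
      (hasDerivAt_mul_const (v (f k))).const_add (x (f k))).const_mul _
  have hfun : (fun t : ℝ => polyT A (x + t • v))
      = fun t => ∑ f, A f * ∏ k, (x (f k) + t * v (f k)) := by
    ext t
    simp [polyT]
  rw [hfun]
  refine (HasDerivAt.fun_sum fun f (_ : f ∈ univ) => hterm f).congr_deriv ?_
  simp only [zero_mul, add_zero, smul_eq_mul, Finset.mul_sum]
  rw [Finset.sum_comm, Finset.sum_congr rfl fun k _ => hA.sum_mul_prod_erase_mul x v k]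
  simp [Finset.mul_sum]

lemma hasDerivAt_powSum_add_smul (x v : Fin n → ℝ) :
    HasDerivAt (fun t : ℝ => powSum (m+1) (x + t • v))
      ((m + 1) * ∑ j, v j * x j ^ m) 0 := by
  have hterm (j : Fin n) : HasDerivAt (fun t : ℝ => (x j + t * v j) ^ (m+1))
      ((((m+1 : ℕ) : ℝ) * (x j + 0 * v j) ^ m) * v j) 0 :=
    ((hasDerivAt_mul_const (v j)).const_add (x j)).pow (m+1)
  have hfun : (fun t : ℝ => powSum (m+1) (x + t • v))
      = fun t => ∑ j, (x j + t * v j) ^ (m+1) := by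
    ext t
    simp [powSum]
  rw [hfun]
  refine (HasDerivAt.fun_sum fun j (_ : j ∈ univ) => hterm j).congr_deriv ?_
  rw [Finset.mul_sum]
  push_cast
  exact Finset.sum_congr rfl fun _ _ => by ring

end Derivative

section Eigen
variable {m n : ℕ}

/-- If `A x^{m+1} - μ ∑ xⱼ^{m+1}` is nonnegative and vanishes at `x₀`, then `x₀` is a critical
point, and the vanishing gradient is the H-eigenvalue equation. -/
lemma IsSymmetricTensor.contrT_eq_of_mul_powSum_le {A : (Fin (m+1) → Fin n) → ℝ}
    (hA : IsSymmetricTensor A) {μ : ℝ} {x₀ : Fin n → ℝ}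
    (hle : ∀ y, μ * powSum (m+1) y ≤ polyT A y) (heq : polyT A x₀ = μ * powSum (m+1) x₀)
    (i : Fin n) : contrT A x₀ i = μ * x₀ i ^ m := by
  set e : Fin n → ℝ := Pi.single i 1
  have hmin : IsLocalMin (fun t : ℝ => polyT A (x₀ + t • e) - μ * powSum (m+1) (x₀ + t • e)) 0 :=
    Filter.Eventually.of_forall fun t => by simpa [heq] using hle (x₀ + t • e)
  have hderiv := hmin.hasDerivAt_eq_zero ((hA.hasDerivAt_polyT_add_smul x₀ e).fun_sub
    ((hasDerivAt_powSum_add_smul (m := m) x₀ e).const_mul μ))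
  simp only [e, Pi.single_apply, ite_mul, one_mul, zero_mul, Finset.sum_ite_eq',
    Finset.mem_univ, if_true] at hderiv
  have hm : (m : ℝ) + 1 ≠ 0 := by positivity
  apply mul_left_cancel₀ hm
  linarith

theorem IsSymmetricTensor.exists_hEigenvector [Nonempty (Fin n)]
    {A : (Fin (m+1) → Fin n) → ℝ} (hA : IsSymmetricTensor A) (hm : Even (m+1)) :
    ∃ x₀ ≠ 0, ∃ μ, (∀ i, contrT A x₀ i = μ * x₀ i ^ m) ∧
      ∀ y, μ * powSum (m+1) y ≤ polyT A y := by
  have hne : {y : Fin n → ℝ | powSum (m+1) y = 1}.Nonempty :=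
    ⟨Pi.single (Classical.arbitrary _) 1, by simp [powSum, Pi.single_apply]⟩
  obtain ⟨x₀, hx₀, hmin⟩ :=
    (isCompact_powSum_eq_one hm m.succ_ne_zero).exists_isMinOn hne (continuous_polyT A).continuousOn
  have hle (y : Fin n → ℝ) : polyT A x₀ * powSum (m+1) y ≤ polyT A y :=
    hmin.mul_powSum_le_polyT hm m.succ_ne_zero y
  have heq : polyT A x₀ = polyT A x₀ * powSum (m+1) x₀ := by rw [hx₀.out, mul_one]
  refine ⟨x₀, ?_, polyT A x₀, hA.contrT_eq_of_mul_powSum_le hle heq, hle⟩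
  rintro rfl
  simp [powSum] at hx₀

end Eigen

theorem stmt8 (m n : ℕ) (hm : Even (m + 1))
    (A : (Fin (m+1) → Fin n) → ℝ)
    (hsym : ∀ (σ : Equiv.Perm (Fin (m+1))) (f : Fin (m+1) → Fin n), A (f ∘ σ) = A f) :
    IsPTensor A ↔ ∀ x : Fin n → ℝ, x ≠ 0 → 0 < polyT A x := by
  refine ⟨fun hP x hx => ?_, fun hpos x hx => ?_⟩
  · obtain ⟨j, -⟩ := Function.ne_iff.1 hx
    have : Nonempty (Fin n) := ⟨j⟩
    obtain ⟨x₀, hx₀, μ, heig, hle⟩ := IsSymmetricTensor.exists_hEigenvector hsym hm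
    obtain ⟨i, hi⟩ := hP x₀ hx₀
    rw [heig i, mul_left_comm, ← pow_succ'] at hi
    have hμ : 0 < μ := pos_of_mul_pos_left hi (hm.pow_nonneg _)
    exact (mul_pos hμ (powSum_pos hm hx)).trans_le (hle x)
  · have hsum : ∑ i : Fin n, (0 : ℝ) < ∑ i, x i * contrT A x i := by
      simpa [← polyT_eq_sum_mul_contrT] using hpos x hx
    obtain ⟨i, -, hi⟩ := Finset.exists_lt_of_sum_lt hsum
    exact ⟨i, hi⟩
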